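/- arXiv:math/0403169 — 2 statements merged into one kernel-verified Lean document; each statement's English description precedes it below -/
import Mathlib

section
/- For every sequence ω : ℕ → ℝ and all real numbers α, β with α < β, there exists a real number η with α < η < β such that η ≠ ω(ν) for every natural number ν. -/
theorem stmt_11 (ω : ℕ → ℝ) (α β : ℝ) (hαβ : α < β) :
    ∃ η : ℝ, α < η ∧ η < β ∧ ∀ ν : ℕ, η ≠ ω ν := by
  have h : ¬ (Set.Ioo α β ⊆ Set.range ω) := by
    intro hsub
    have hc : (Set.Ioo α β).Countable := (Set.countable_range ω).mono hsub
    have := hc.le_aleph0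
    rw [Cardinal.mk_Ioo_real hαβ] at this
    exact absurd this (not_le.mpr Cardinal.aleph0_lt_continuum)
  obtain ⟨η, hη, hnr⟩ := Set.not_subset.mp h
  exact ⟨η, hη.1, hη.2, fun ν hν => hnr ⟨ν, hν.symm⟩⟩
end

section
/- Let A and B be dense subsets of ℝ and let φ : A → B be an order isomorphism (an order-preserving bijection between A and B). Then there exists an order isomorphism Φ : ℝ → ℝ such that Φ(a) = φ(a) for every a ∈ A. -/
open Set

noncomputable def myExt (A B : Set ℝ) (φ : A ≃o B) (x : ℝ) : ℝ :=
  sSup ((fun a : A => (φ a : ℝ)) '' {a : A | (a : ℝ) < x})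

section

variable {A B : Set ℝ}

lemma myExt_nonempty (hA : Dense A) (φ : A ≃o B) (x : ℝ) :
    ((fun a : A => (φ a : ℝ)) '' {a : A | (a : ℝ) < x}).Nonempty := by
  obtain ⟨c, hcA, hc⟩ := hA.exists_between (show x - 1 < x by linarith)
  exact ⟨φ ⟨c, hcA⟩, ⟨⟨c, hcA⟩, hc.2, rfl⟩⟩

lemma myExt_bdd (hA : Dense A) (φ : A ≃o B) (x : ℝ) :
    BddAbove ((fun a : A => (φ a : ℝ)) '' {a : A | (a : ℝ) < x}) := by
  obtain ⟨c, hcA, hc⟩ := hA.exists_between (show x < x + 1 by linarith)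
  refine ⟨(φ ⟨c, hcA⟩ : ℝ), ?_⟩
  rintro y ⟨a, ha, rfl⟩
  have : a ≤ ⟨c, hcA⟩ := by exact_mod_cast le_of_lt (lt_trans ha hc.1)
  exact_mod_cast φ.le_iff_le.2 this

lemma myExt_apply_mem (hA : Dense A) (hB : Dense B) (φ : A ≃o B) (a : A) : myExt A B φ (a : ℝ) = (φ a : ℝ) := by
  apply le_antisymm
  · apply csSup_le (myExt_nonempty hA φ _)
    rintro y ⟨c, hc, rfl⟩
    have : c ≤ a := by exact_mod_cast le_of_lt hc
    exact_mod_cast φ.le_iff_le.2 this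
  · by_contra h
    push_neg at h
    obtain ⟨b, hbB, hb⟩ := hB.exists_between h
    set c : A := φ.symm ⟨b, hbB⟩ with hc
    have hφc : (φ c : ℝ) = b := by simp [hc]
    have hca : c < a := by
      have : φ c < φ a := by
        rw [← Subtype.coe_lt_coe, hφc]; exact hb.2
      exact φ.lt_iff_lt.1 this
    have : (φ c : ℝ) ≤ myExt A B φ (a : ℝ) :=
      le_csSup (myExt_bdd hA φ _) ⟨c, by exact_mod_cast hca, rfl⟩
    rw [hφc] at this
    exact absurd hb.1 (not_lt.2 this)

lemma myExt_strictMono (hA : Dense A) (φ : A ≃o B) : StrictMono (myExt A B φ) := by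
  intro x y hxy
  obtain ⟨a, haA, ha⟩ := hA.exists_between hxy
  obtain ⟨a', ha'A, ha'⟩ := hA.exists_between ha.2
  have h1 : myExt A B φ x ≤ (φ ⟨a, haA⟩ : ℝ) := by
    apply csSup_le (myExt_nonempty hA φ _)
    rintro z ⟨c, hc, rfl⟩
    have : c ≤ ⟨a, haA⟩ := by exact_mod_cast le_of_lt (lt_trans hc ha.1)
    exact_mod_cast φ.le_iff_le.2 this
  have h2 : (φ ⟨a, haA⟩ : ℝ) < (φ ⟨a', ha'A⟩ : ℝ) := by
    exact_mod_cast φ.lt_iff_lt.2 (by exact_mod_cast ha'.1)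
  have h3 : (φ ⟨a', ha'A⟩ : ℝ) ≤ myExt A B φ y :=
    le_csSup (myExt_bdd hA φ _) ⟨⟨a', ha'A⟩, ha'.2, rfl⟩
  exact lt_of_le_of_lt h1 (lt_of_lt_of_le h2 h3)

lemma myExt_rightInverse (hA : Dense A) (hB : Dense B) (φ : A ≃o B) :
    Function.RightInverse (myExt B A φ.symm) (myExt A B φ) := by
  intro y
  have key : ∀ b : B, myExt A B φ (myExt B A φ.symm (b : ℝ)) = (b : ℝ) := by
    intro b
    rw [myExt_apply_mem hB hA φ.symm b, myExt_apply_mem hA hB φ (φ.symm b)]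
    simp
  have hmono : StrictMono (fun z => myExt A B φ (myExt B A φ.symm z)) :=
    (myExt_strictMono hA φ).comp (myExt_strictMono hB φ.symm)
  rcases lt_trichotomy (myExt A B φ (myExt B A φ.symm y)) y with h | h | h
  · obtain ⟨b, hbB, hb⟩ := hB.exists_between h
    have h2 : myExt A B φ (myExt B A φ.symm b) < myExt A B φ (myExt B A φ.symm y) :=
      hmono hb.2
    rw [(key ⟨b, hbB⟩ : myExt A B φ (myExt B A φ.symm b) = b)] at h2
    exact absurd hb.1 (not_lt.2 (le_of_lt h2))
  · exact h
  · obtain ⟨b, hbB, hb⟩ := hB.exists_between h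
    have h2 : myExt A B φ (myExt B A φ.symm y) < myExt A B φ (myExt B A φ.symm b) :=
      hmono hb.1
    rw [(key ⟨b, hbB⟩ : myExt A B φ (myExt B A φ.symm b) = b)] at h2
    exact absurd hb.2 (not_lt.2 (le_of_lt h2))

end

theorem stmt_15 (A B : Set ℝ) (hA : Dense A) (hB : Dense B) (φ : A ≃o B) :
    ∃ Φ : ℝ ≃o ℝ, ∀ a : A, Φ (a : ℝ) = (φ a : ℝ) := by
  refine ⟨StrictMono.orderIsoOfRightInverse _ (myExt_strictMono hA φ)
      _ (myExt_rightInverse hA hB φ), ?_⟩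
  intro a
  exact myExt_apply_mem hA hB φ a
end
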